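/- arXiv:1706.01732 — 8 statements merged into one kernel-verified Lean document; each statement's English description precedes it below -/
import Mathlib

section
/- For every ε > 0 there exists a constant C ≥ 1, depending only on ε, with the following property: for every rectifiable curve γ : [0,1] → ℂ of length ℓ > 0 and every holomorphic injective function g defined on the open set 𝔻(γ([0,1]), εℓ) (the εℓ-neighborhood of the image of γ), one has |g'(u)| ≤ C |g'(v)| for all points u, v in the image of γ. -/
/-!
Koebe's square-root trick shows that a univalent `f` on a disk `B(c, r)` covers
`B(f c, r ‖f' c‖ / 16)`: if `w` is omitted, a holomorphic square root `h` of
`(w - f) / (w - f c)` satisfies `h x ≠ -h y`, so `H = (h - 1) / (h + 1)` never takes two values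
with product `1`; such an `H` is bounded by the reciprocal of any disk it covers, and a
Landau-type covering estimate for bounded maps then gives `r ‖H' c‖ ≤ 4`.
Applied to `f` and to its (holomorphic) inverse this bounds the growth of `f` on `B(c, r / 256)`,
and the Cauchy estimate shows that `‖f'‖` changes by a factor at most `64` over a distance
`r / 512`. Hence `log ‖g' ∘ γ‖` changes by at most `log 64` between points of the curve at
distance `εℓ / 512`; by the intermediate value theorem an arc of length `< N εℓ / 512` is
covered by `N` such steps, and `N = ⌈512 / ε⌉ + 1` works for the whole curve.
-/

open Metric Set Filter Function
open scoped Topology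

namespace Complex

section InjOn

variable {f : ℂ → ℂ} {U : Set ℂ}

theorem not_eventually_eq_of_injOn (hU : IsOpen U) (hinj : InjOn f U) {z : ℂ} (hz : z ∈ U) :
    ¬ ∀ᶠ x in 𝓝 z, f x = f z := by
  intro h
  have : ∀ᶠ x in 𝓝[≠] z, x = z := nhdsWithin_le_nhds <| by
    filter_upwards [h, hU.mem_nhds hz] with x hx hxU using hinj hxU hz hx
  obtain ⟨x, hxz, hx⟩ := (this.and self_mem_nhdsWithin).exists
  exact hx hxz

theorem isOpen_image_of_injOn (hU : IsOpen U) (hf : DifferentiableOn ℂ f U) (hinj : InjOn f U)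
    {V : Set ℂ} (hVU : V ⊆ U) (hV : IsOpen V) : IsOpen (f '' V) := by
  refine isOpen_iff_mem_nhds.mpr ?_
  rintro _ ⟨z, hz, rfl⟩
  have hzU := hVU hz
  rcases (hf.analyticAt (hU.mem_nhds hzU)).eventually_constant_or_nhds_le_map_nhds with
    hconst | hopen
  · exact absurd hconst (not_eventually_eq_of_injOn hU hinj hzU)
  · exact hopen (image_mem_map (hV.mem_nhds hz))

theorem continuousAt_invFunOn (hU : IsOpen U) (hf : DifferentiableOn ℂ f U) (hinj : InjOn f U)
    {z : ℂ} (hz : z ∈ U) : ContinuousAt (invFunOn f U) (f z) := by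
  intro W hW
  rw [hinj.leftInvOn_invFunOn hz] at hW
  obtain ⟨V, hVW, hV, hzV⟩ := _root_.mem_nhds_iff.mp (inter_mem hW (hU.mem_nhds hz))
  have hmem : f '' V ∈ 𝓝 (f z) :=
    (isOpen_image_of_injOn hU hf hinj (hVW.trans inter_subset_right) hV).mem_nhds ⟨z, hzV, rfl⟩
  refine mem_map.mpr (mem_of_superset hmem ?_)
  rintro _ ⟨x, hx, rfl⟩
  rw [mem_preimage, hinj.leftInvOn_invFunOn (hVW hx).2]
  exact (hVW hx).1

theorem hasStrictDerivAt_invFunOn (hU : IsOpen U) (hf : DifferentiableOn ℂ f U)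
    (hinj : InjOn f U) {z : ℂ} (hz : z ∈ U) (hf' : deriv f z ≠ 0) :
    HasStrictDerivAt (invFunOn f U) (deriv f z)⁻¹ (f z) :=
  (hf.analyticAt (hU.mem_nhds hz)).hasStrictDerivAt.to_local_left_inverse hf'
    (eventually_of_mem (hU.mem_nhds hz) fun _ hx => hinj.leftInvOn_invFunOn hx)

theorem eventually_deriv_ne_zero_of_injOn (hU : IsOpen U) (hf : DifferentiableOn ℂ f U)
    (hinj : InjOn f U) {z : ℂ} (hz : z ∈ U) : ∀ᶠ x in 𝓝[≠] z, deriv f x ≠ 0 := by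
  refine (hf.analyticAt (hU.mem_nhds hz)).deriv.eventually_eq_zero_or_eventually_ne_zero
    |>.resolve_left fun h => ?_
  obtain ⟨ρ, hρ, hρU⟩ := Metric.mem_nhds_iff.mp (inter_mem h (hU.mem_nhds hz))
  refine not_eventually_eq_of_injOn hU hinj hz (eventually_of_mem (ball_mem_nhds z hρ) ?_)
  intro x hx
  exact isOpen_ball.is_const_of_deriv_eq_zero (convex_ball z ρ).isPreconnected
    (hf.mono fun y hy => (hρU hy).2) (fun y hy => (hρU hy).1) hx (mem_ball_self hρ)

theorem tendsto_invFunOn_nhdsNE (hU : IsOpen U) (hf : DifferentiableOn ℂ f U)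
    (hinj : InjOn f U) {z : ℂ} (hz : z ∈ U) :
    Tendsto (invFunOn f U) (𝓝[≠] (f z)) (𝓝[≠] z) := by
  have hcont := continuousAt_invFunOn hU hf hinj hz
  rw [ContinuousAt, hinj.leftInvOn_invFunOn hz] at hcont
  refine tendsto_nhdsWithin_of_tendsto_nhds_of_eventually_within _
    (hcont.mono_left nhdsWithin_le_nhds) ?_
  have himage : f '' U ∈ 𝓝 (f z) :=
    (isOpen_image_of_injOn hU hf hinj subset_rfl hU).mem_nhds ⟨z, hz, rfl⟩
  filter_upwards [self_mem_nhdsWithin, eventually_nhdsWithin_of_eventually_nhds himage]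
    with y hy ⟨x, hx, hxy⟩ hFy
  rw [← hxy, mem_singleton_iff, hinj.leftInvOn_invFunOn hx] at hFy
  exact hy (hxy ▸ congrArg f hFy)

theorem deriv_ne_zero_of_injOn (hU : IsOpen U) (hf : DifferentiableOn ℂ f U) (hinj : InjOn f U)
    {z : ℂ} (hz : z ∈ U) : deriv f z ≠ 0 := by
  set F := invFunOn f U
  -- `F` is holomorphic off the isolated critical values and continuous, hence holomorphic
  -- at `f z` by the removable singularity theorem; then `F ∘ f = id` forces `f' z ≠ 0`.
  have himage : f '' U ∈ 𝓝 (f z) :=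
    (isOpen_image_of_injOn hU hf hinj subset_rfl hU).mem_nhds ⟨z, hz, rfl⟩
  have hFdiff : ∀ᶠ y in 𝓝[≠] (f z), DifferentiableAt ℂ F y := by
    filter_upwards [eventually_nhdsWithin_of_eventually_nhds himage,
      (tendsto_invFunOn_nhdsNE hU hf hinj hz).eventually
        ((eventually_deriv_ne_zero_of_injOn hU hf hinj hz).and
          (eventually_nhdsWithin_of_eventually_nhds (hU.mem_nhds hz)))]
      with y ⟨x, hx, hxy⟩ hcy
    rw [← hxy, hinj.leftInvOn_invFunOn hx] at hcy
    rw [← hxy]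
    exact (hasStrictDerivAt_invFunOn hU hf hinj hcy.2 hcy.1).hasDerivAt.differentiableAt
  have hFan := analyticAt_of_differentiable_on_punctured_nhds_of_continuousAt hFdiff
    (continuousAt_invFunOn hU hf hinj hz)
  have hchain : HasDerivAt (F ∘ f) (deriv F (f z) * deriv f z) z :=
    hFan.differentiableAt.hasDerivAt.comp z (hf.differentiableAt (hU.mem_nhds hz)).hasDerivAt
  have hid : HasDerivAt (F ∘ f) 1 z := (hasDerivAt_id z).congr_of_eventuallyEq
    (eventually_of_mem (hU.mem_nhds hz) fun _ hx => hinj.leftInvOn_invFunOn hx)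
  intro h
  simpa [h] using hchain.unique hid

theorem hasDerivAt_invFunOn (hU : IsOpen U) (hf : DifferentiableOn ℂ f U) (hinj : InjOn f U)
    {z : ℂ} (hz : z ∈ U) : HasDerivAt (invFunOn f U) (deriv f z)⁻¹ (f z) :=
  (hasStrictDerivAt_invFunOn hU hf hinj hz (deriv_ne_zero_of_injOn hU hf hinj hz)).hasDerivAt

theorem differentiableOn_invFunOn (hU : IsOpen U) (hf : DifferentiableOn ℂ f U)
    (hinj : InjOn f U) : DifferentiableOn ℂ (invFunOn f U) (f '' U) := by
  rintro _ ⟨z, hz, rfl⟩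
  exact (hasDerivAt_invFunOn hU hf hinj hz).differentiableAt.differentiableWithinAt

end InjOn

theorem exists_exp_eq_of_ne_zero {u : ℂ → ℂ} {c : ℂ} {R : ℝ}
    (hu : DifferentiableOn ℂ u (ball c R)) (hne : ∀ z ∈ ball c R, u z ≠ 0) :
    ∃ L : ℂ → ℂ, DifferentiableOn ℂ L (ball c R) ∧ ∀ z ∈ ball c R, exp (L z) = u z := by
  obtain ⟨L, hL⟩ := ((hu.deriv isOpen_ball).div hu hne).isExactOn_ball
  have hLd : DifferentiableOn ℂ L (ball c R) := fun z hz =>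
    (hL z hz).differentiableAt.differentiableWithinAt
  set φ : ℂ → ℂ := fun z => u z * exp (-L z)
  have hφ : ∀ z ∈ ball c R, HasDerivAt φ 0 z := by
    intro z hz
    have hu' := (hu.differentiableAt (isOpen_ball.mem_nhds hz)).hasDerivAt
    refine (hu'.fun_mul (hL z hz).fun_neg.cexp).congr_deriv ?_
    simp only [Pi.div_apply]
    field_simp [hne z hz]
    ring
  obtain ⟨a, ha⟩ := isOpen_ball.exists_is_const_of_deriv_eq_zero
    (convex_ball c R).isPreconnected (fun z hz => (hφ z hz).differentiableAt.differentiableWithinAt)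
    (fun z hz => (hφ z hz).deriv)
  refine ⟨fun z => L z + log a, hLd.add_const _, fun z hz => ?_⟩
  have ha0 : a ≠ 0 := ha z hz ▸ mul_ne_zero (hne z hz) (exp_ne_zero _)
  rw [exp_add, exp_log ha0, ← ha z hz]
  simp only [φ, exp_neg]
  field_simp

theorem norm_sub_sub_deriv_mul_le {H : ℂ → ℂ} {c z : ℂ} {R M : ℝ}
    (hH : DifferentiableOn ℂ H (ball c R)) (hM : ∀ x ∈ ball c R, ‖H x - H c‖ ≤ M)
    (hz : z ∈ ball c R) :
    ‖H z - H c - deriv H c * (z - c)‖ ≤ 2 * M / R / R * ‖z - c‖ ^ 2 := by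
  have hcR : c ∈ ball c R := mem_ball_self (dist_nonneg.trans_lt (mem_ball.mp hz))
  have hmaps : MapsTo H (ball c R) (closedBall (H c) M) := fun x hx => by
    simpa [dist_eq_norm] using hM x hx
  set ψ := dslope H c
  have hψ : DifferentiableOn ℂ ψ (ball c R) :=
    (differentiableOn_dslope (isOpen_ball.mem_nhds hcR)).mpr hH
  have hψM : ∀ x ∈ ball c R, ‖ψ x‖ ≤ M / R := fun x hx =>
    norm_dslope_le_div_of_mapsTo_ball hH hmaps hx
  have hψmaps : MapsTo ψ (ball c R) (closedBall (ψ c) (2 * M / R)) := fun x hx => by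
    rw [mem_closedBall, dist_eq_norm, two_mul, add_div]
    exact (norm_sub_le _ _).trans (add_le_add (hψM x hx) (hψM c hcR))
  have hsplit : H z - H c - deriv H c * (z - c) = (z - c) ^ 2 * dslope ψ c z := by
    have hH := sub_smul_dslope H c z
    have hψ := sub_smul_dslope ψ c z
    simp only [smul_eq_mul, ψ, dslope_same] at hH hψ
    linear_combination -hH - (z - c) * hψ
  rw [hsplit, norm_mul, norm_pow, mul_comm]
  gcongr
  exact norm_dslope_le_div_of_mapsTo_ball hψ hψmaps hz

theorem ball_subset_image_of_norm_sub_le {H : ℂ → ℂ} {c : ℂ} {R M : ℝ} (hR : 0 < R)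
    (hH : DifferentiableOn ℂ H (ball c R)) (hM : ∀ z ∈ ball c R, ‖H z - H c‖ ≤ M) :
    ball (H c) ((R * ‖deriv H c‖) ^ 2 / (16 * M)) ⊆ H '' ball c R := by
  set m := ‖deriv H c‖
  rcases (norm_nonneg (deriv H c)).eq_or_lt with hm0 | hm0
  · simp [m, ← hm0]
  have hmM : m * R ≤ M := (le_div_iff₀ hR).mp (norm_deriv_le_div_of_mapsTo_ball hH
    (fun z hz => by simpa [dist_eq_norm] using hM z hz) hR)
  have hMpos : 0 < M := lt_of_lt_of_le (by positivity) hmM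
  -- On the circle of radius `ρ` the linear term `m ρ` beats the quadratic error `2 M ρ² / R²`.
  set ρ := m * R ^ 2 / (4 * M)
  have hρ : 0 < ρ := by positivity
  have hρR : ρ < R := by
    rw [div_lt_iff₀ (by positivity)]
    nlinarith
  have hsphere : ∀ z ∈ sphere c ρ, m ^ 2 * R ^ 2 / (8 * M) ≤ ‖H z - H c‖ := by
    intro z hz
    have hzc : ‖z - c‖ = ρ := by simpa [dist_eq_norm] using hz
    have hzR : z ∈ ball c R := by rw [mem_ball, dist_eq_norm, hzc]; exact hρR
    have herr := norm_sub_sub_deriv_mul_le hH hM hzR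
    have hlin := norm_sub_norm_le (deriv H c * (z - c)) (H z - H c)
    rw [norm_sub_rev (deriv H c * (z - c)), norm_mul, hzc] at hlin
    rw [hzc] at herr
    have : 2 * M / R / R * ρ ^ 2 = m ^ 2 * R ^ 2 / (8 * M) := by
      simp only [ρ]; field_simp; ring
    have : m * ρ = 2 * (m ^ 2 * R ^ 2 / (8 * M)) := by simp only [ρ]; field_simp; ring
    linarith
  have hfreq : ∃ᶠ z in 𝓝 c, H z ≠ H c := by
    intro hconst
    have hconst' : H =ᶠ[𝓝 c] fun _ => H c := hconst.mono fun z hz => not_not.mp hz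
    simp [hconst'.deriv_eq] at hm0
  have hcover := DiffContOnCl.ball_subset_image_closedBall
    (hH.diffContOnCl_ball (closedBall_subset_ball hρR)) hρ hsphere hfreq
  refine (ball_subset_ball (le_of_eq ?_)).trans
    (hcover.trans (image_mono (closedBall_subset_ball hρR)))
  field_simp
  ring

theorem norm_le_inv_of_ball_subset_image {H : ℂ → ℂ} {D : Set ℂ}
    (hmul : ∀ x ∈ D, ∀ y ∈ D, H x * H y ≠ 1) {σ : ℝ} (hσ : 0 < σ)
    (hball : ball 0 σ ⊆ H '' D) {z : ℂ} (hz : z ∈ D) : ‖H z‖ ≤ σ⁻¹ := by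
  by_contra! hlt
  have hHz : H z ≠ 0 := norm_pos_iff.mp ((inv_pos.mpr hσ).trans hlt)
  obtain ⟨y, hy, hHy⟩ := hball (show (H z)⁻¹ ∈ ball 0 σ by
    rw [mem_ball_zero_iff, norm_inv]
    exact inv_lt_of_inv_lt₀ hσ hlt)
  exact hmul z hz y hy (by rw [hHy, mul_inv_cancel₀ hHz])

theorem norm_deriv_le_of_mul_ne_one {H : ℂ → ℂ} {c : ℂ} {r : ℝ} (hr : 0 < r)
    (hH : DifferentiableOn ℂ H (ball c r)) (hHc : H c = 0)
    (hmul : ∀ x ∈ ball c r, ∀ y ∈ ball c r, H x * H y ≠ 1) : r * ‖deriv H c‖ ≤ 4 := by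
  by_contra! hrm
  set m := ‖deriv H c‖
  have hcD : c ∈ ball c r := mem_ball_self hr
  have himage : H '' ball c r ∈ 𝓝 0 := by
    rcases (hH.analyticAt (isOpen_ball.mem_nhds hcD)).eventually_constant_or_nhds_le_map_nhds with
      hconst | hopen
    · have hconst' : H =ᶠ[𝓝 c] fun _ => H c := hconst
      norm_num [m, hconst'.deriv_eq] at hrm
    · exact hHc ▸ hopen (image_mem_map (isOpen_ball.mem_nhds hcD))
  obtain ⟨σ₀, hσ₀, hσ₀D⟩ := Metric.mem_nhds_iff.mp himage
  have hbdd : BddAbove ((‖H ·‖) '' ball c r) := ⟨σ₀⁻¹, by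
    rintro _ ⟨z, hz, rfl⟩
    exact norm_le_inv_of_ball_subset_image hmul hσ₀ hσ₀D hz⟩
  -- `M = sup ‖H‖` bounds the radius of a disk in the image, which in turn bounds `M`.
  set M := sSup ((‖H ·‖) '' ball c r)
  have hM : ∀ z ∈ ball c r, ‖H z - H c‖ ≤ M := fun z hz => by
    simpa [hHc] using le_csSup hbdd ⟨z, hz, rfl⟩
  have hrmM : r * m ≤ M := by
    have := norm_deriv_le_div_of_mapsTo_ball hH
      (fun z hz => by simpa [dist_eq_norm] using hM z hz) hr
    rwa [le_div_iff₀ hr, mul_comm] at this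
  have hMpos : 0 < M := by linarith
  have hcover := ball_subset_image_of_norm_sub_le hr hH hM
  rw [hHc] at hcover
  have hMle : M ≤ 16 * M / (r * m) ^ 2 := by
    refine csSup_le ⟨_, c, hcD, rfl⟩ ?_
    rintro _ ⟨z, hz, rfl⟩
    simpa using norm_le_inv_of_ball_subset_image hmul (by positivity) hcover hz
  rw [le_div_iff₀ (by positivity)] at hMle
  have h16 : 16 < (r * m) ^ 2 := by nlinarith
  nlinarith

theorem exists_sq_eq_of_ne_zero {u : ℂ → ℂ} {c : ℂ} {r : ℝ} (hr : 0 < r)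
    (hu : DifferentiableOn ℂ u (ball c r)) (hne : ∀ z ∈ ball c r, u z ≠ 0) (huc : u c = 1) :
    ∃ h : ℂ → ℂ, DifferentiableOn ℂ h (ball c r) ∧ (∀ z ∈ ball c r, h z ^ 2 = u z) ∧ h c = 1 := by
  obtain ⟨L, hL, hLu⟩ := exists_exp_eq_of_ne_zero hu hne
  refine ⟨fun z => exp ((L z - L c) / 2), ((hL.sub_const _).div_const 2).cexp,
    fun z hz => ?_, by simp⟩
  rw [← hLu z hz, ← exp_nat_mul, ← div_one (exp (L z)), ← huc, ← hLu c (mem_ball_self hr),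
    ← exp_sub]
  push_cast
  ring_nf

theorem exists_mul_ne_one_of_notMem_image {f : ℂ → ℂ} {c w : ℂ} {r : ℝ} (hr : 0 < r)
    (hf : DifferentiableOn ℂ f (ball c r)) (hinj : InjOn f (ball c r))
    (hw : w ∉ f '' ball c r) :
    ∃ H : ℂ → ℂ, DifferentiableOn ℂ H (ball c r) ∧ H c = 0 ∧
      deriv H c = -deriv f c / (4 * (w - f c)) ∧
      ∀ x ∈ ball c r, ∀ y ∈ ball c r, H x * H y ≠ 1 := by
  have hcD : c ∈ ball c r := mem_ball_self hr
  set a := w - f c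
  have ha : a ≠ 0 := fun h => hw ⟨c, hcD, (sub_eq_zero.mp h).symm⟩
  set u : ℂ → ℂ := fun z => (w - f z) / a
  have hu0 : ∀ z ∈ ball c r, u z ≠ 0 := fun z hz h =>
    hw ⟨z, hz, (sub_eq_zero.mp ((div_eq_zero_iff.mp h).resolve_right ha)).symm⟩
  obtain ⟨h, hh, hsq, hhc⟩ :=
    exists_sq_eq_of_ne_zero (u := u) hr ((hf.const_sub w).div_const a) hu0 (div_self ha)
  have hsum : ∀ x ∈ ball c r, ∀ y ∈ ball c r, h x + h y ≠ 0 := by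
    intro x hx y hy hxy
    have huxy : u x = u y := by
      rw [← hsq x hx, ← hsq y hy, eq_neg_of_add_eq_zero_left hxy]
      ring
    obtain rfl : x = y := hinj hx hy (by simpa [u, ha] using huxy)
    exact hu0 x hx (by rw [← hsq x hx, show h x = 0 by linear_combination hxy / 2]; ring)
  have hden : ∀ z ∈ ball c r, h z + 1 ≠ 0 := fun z hz => by simpa [hhc] using hsum z hz c hcD
  refine ⟨fun z => (h z - 1) / (h z + 1), (hh.sub_const 1).div (hh.add_const 1) hden,
    by simp [hhc], ?_, fun x hx y hy hxy => hsum x hx y hy ?_⟩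
  · have hhd : HasDerivAt h (deriv h c) c :=
      (hh.differentiableAt (isOpen_ball.mem_nhds hcD)).hasDerivAt
    have hud : HasDerivAt u (-deriv f c / a) c :=
      ((hf.differentiableAt (isOpen_ball.mem_nhds hcD)).hasDerivAt.const_sub w).div_const a
    have hud' : HasDerivAt u (2 * deriv h c) c := by
      refine ((hhd.pow 2).congr_of_eventuallyEq ?_).congr_deriv (by simp [hhc])
      exact eventually_of_mem (isOpen_ball.mem_nhds hcD) fun z hz => (hsq z hz).symm
    have hfh : -deriv f c = 2 * deriv h c * a := (div_eq_iff ha).mp (hud.unique hud')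
    rw [((hhd.sub_const 1).fun_div (hhd.add_const 1) (hden c hcD)).deriv, hhc, hfh]
    field_simp
    ring
  · rw [div_mul_div_comm, div_eq_one_iff_eq (mul_ne_zero (hden x hx) (hden y hy))] at hxy
    linear_combination -hxy / 2

theorem ball_subset_image_of_injOn {f : ℂ → ℂ} {c : ℂ} {r : ℝ}
    (hf : DifferentiableOn ℂ f (ball c r)) (hinj : InjOn f (ball c r)) :
    ball (f c) (r * ‖deriv f c‖ / 16) ⊆ f '' ball c r := by
  intro w hw
  have hw' : ‖w - f c‖ < r * ‖deriv f c‖ / 16 := by simpa [dist_eq_norm] using hw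
  have hr : 0 < r := by
    by_contra! hr
    nlinarith [norm_nonneg (w - f c), norm_nonneg (deriv f c)]
  by_contra hwf
  obtain ⟨H, hH, hHc, hderiv, hmul⟩ := exists_mul_ne_one_of_notMem_image hr hf hinj hwf
  have hbound := norm_deriv_le_of_mul_ne_one hr hH hHc hmul
  have ha : 0 < ‖w - f c‖ :=
    norm_pos_iff.mpr fun h => hwf ⟨c, mem_ball_self hr, (sub_eq_zero.mp h).symm⟩
  rw [hderiv, norm_div, norm_neg, norm_mul, show ‖(4 : ℂ)‖ = 4 by norm_num, mul_div_assoc',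
    div_le_iff₀ (by positivity)] at hbound
  linarith

theorem image_ball_subset_of_injOn {f : ℂ → ℂ} {c : ℂ} {r : ℝ}
    (hf : DifferentiableOn ℂ f (ball c r)) (hinj : InjOn f (ball c r)) :
    f '' ball c (r / 256) ⊆ ball (f c) (r * ‖deriv f c‖ / 16) := by
  rintro _ ⟨x, hx, rfl⟩
  have hr : 0 < r := by linarith [dist_nonneg.trans_lt (mem_ball.mp hx)]
  have hcD : c ∈ ball c r := mem_ball_self hr
  set F := invFunOn f (ball c r)
  set ρ := r * ‖deriv f c‖ / 16
  -- Koebe for the inverse map `F` on the disk that Koebe for `f` puts inside `f '' ball c r`.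
  have hB : ball (f c) ρ ⊆ f '' ball c r := ball_subset_image_of_injOn hf hinj
  have hcover := ball_subset_image_of_injOn
    ((differentiableOn_invFunOn isOpen_ball hf hinj).mono hB) ((invFunOn_injOn_image f _).mono hB)
  have hfc := deriv_ne_zero_of_injOn isOpen_ball hf hinj hcD
  rw [(hasDerivAt_invFunOn isOpen_ball hf hinj hcD).deriv, hinj.leftInvOn_invFunOn hcD,
    norm_inv, show ρ * ‖deriv f c‖⁻¹ / 16 = r / 256 by field_simp; ring] at hcover
  obtain ⟨y, hy, rfl⟩ := hcover hx
  rwa [invFunOn_eq (hB hy)]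

theorem norm_deriv_le_of_injOn {f : ℂ → ℂ} {c w : ℂ} {r : ℝ}
    (hf : DifferentiableOn ℂ f (ball c r)) (hinj : InjOn f (ball c r)) (hw : dist w c ≤ r / 512) :
    ‖deriv f w‖ ≤ 64 * ‖deriv f c‖ := by
  rcases eq_or_ne w c with rfl | hwc
  · linarith [norm_nonneg (deriv f w)]
  have hr : 0 < r := by linarith [dist_pos.mpr hwc]
  have hsub : ball w (r / 512) ⊆ ball c (r / 256) := fun x hx => by
    rw [mem_ball] at hx ⊢
    linarith [dist_triangle x w c]
  have hgrowth := image_ball_subset_of_injOn hf hinj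
  have hfw : f w ∈ ball (f c) (r * ‖deriv f c‖ / 16) :=
    hgrowth ⟨w, hsub (mem_ball_self (by positivity)), rfl⟩
  have hmaps : MapsTo f (ball w (r / 512)) (closedBall (f w) (r * ‖deriv f c‖ / 8)) := by
    intro x hx
    have hfx := hgrowth ⟨x, hsub hx, rfl⟩
    rw [mem_ball] at hfw hfx
    rw [mem_closedBall]
    linarith [dist_triangle_right (f x) (f w) (f c)]
  have := norm_deriv_le_div_of_mapsTo_ball
    (hf.mono (hsub.trans (ball_subset_ball (by linarith)))) hmaps (by positivity)
  calc ‖deriv f w‖ ≤ r * ‖deriv f c‖ / 8 / (r / 512) := this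
    _ = 64 * ‖deriv f c‖ := by field_simp; ring

theorem abs_log_norm_deriv_sub_le {f : ℂ → ℂ} {U : Set ℂ} (hf : DifferentiableOn ℂ f U)
    (hinj : InjOn f U) {c w : ℂ} {r : ℝ} (hr : 0 < r) (hc : ball c r ⊆ U) (hw : ball w r ⊆ U)
    (hcw : dist c w ≤ r / 512) :
    |Real.log ‖deriv f c‖ - Real.log ‖deriv f w‖| ≤ Real.log 64 := by
  have key : ∀ x y, ball x r ⊆ U → dist y x ≤ r / 512 →
      Real.log ‖deriv f y‖ ≤ Real.log ‖deriv f x‖ + Real.log 64 := by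
    intro x y hx hyx
    have hy : y ∈ ball x r := mem_ball.mpr (by linarith)
    have hfy := deriv_ne_zero_of_injOn isOpen_ball (hf.mono hx) (hinj.mono hx) hy
    have hfx := deriv_ne_zero_of_injOn isOpen_ball (hf.mono hx) (hinj.mono hx) (mem_ball_self hr)
    rw [add_comm, ← Real.log_mul (by norm_num) (norm_ne_zero_iff.mpr hfx)]
    exact Real.log_le_log (norm_pos_iff.mpr hfy)
      (norm_deriv_le_of_injOn (hf.mono hx) (hinj.mono hx) hyx)
  rw [abs_sub_le_iff]
  constructor
  · linarith [key w c hw hcw]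
  · linarith [key c w hc (by rwa [dist_comm])]

end Complex

theorem abs_sub_le_of_eVariationOn_lt {E : Type*} [PseudoMetricSpace E] {γ : ℝ → E} {ψ : ℝ → ℝ}
    {δ L a b : ℝ} (hab : a ≤ b) (hγ : ContinuousOn γ (Icc a b)) (hδ : 0 ≤ δ)
    (hψ : ∀ s ∈ Icc a b, ∀ t ∈ Icc a b, dist (γ s) (γ t) ≤ δ → |ψ s - ψ t| ≤ L) (n : ℕ)
    (hvar : eVariationOn γ (Icc a b) < ENNReal.ofReal (n * δ)) : |ψ a - ψ b| ≤ n * L := by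
  induction n generalizing a with
  | zero => simp at hvar
  | succ n ih =>
    have ha : a ∈ Icc a b := left_mem_Icc.mpr hab
    have hb : b ∈ Icc a b := right_mem_Icc.mpr hab
    have hL : 0 ≤ L := (abs_nonneg _).trans (hψ a ha a ha (by simpa using hδ))
    rcases le_or_gt (dist (γ a) (γ b)) δ with hclose | hfar
    · push_cast
      nlinarith [hψ a ha b hb hclose, (n.cast_nonneg : (0 : ℝ) ≤ n)]
    obtain ⟨t, ht, hγt⟩ : ∃ t ∈ Icc a b, dist (γ t) (γ a) = δ :=
      intermediate_value_Icc hab ((continuous_id.dist continuous_const).comp_continuousOn hγ)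
        ⟨by simpa using hδ, by simpa [dist_comm] using hfar.le⟩
    have hsplit := eVariationOn.Icc_add_Icc γ (s := univ) ht.1 ht.2 (mem_univ t)
    simp only [univ_inter] at hsplit
    have hfirst : ENNReal.ofReal δ ≤ eVariationOn γ (Icc a t) := by
      rw [← hγt, ← edist_dist]
      exact eVariationOn.edist_le γ (right_mem_Icc.mpr ht.1) (left_mem_Icc.mpr ht.1)
    have hrest : eVariationOn γ (Icc t b) < ENNReal.ofReal (n * δ) := by
      rw [← ENNReal.add_lt_add_iff_left ENNReal.ofReal_ne_top]
      calc ENNReal.ofReal δ + eVariationOn γ (Icc t b)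
          ≤ eVariationOn γ (Icc a b) := hsplit ▸ by gcongr
        _ < ENNReal.ofReal ((n + 1 : ℕ) * δ) := hvar
        _ = ENNReal.ofReal δ + ENNReal.ofReal (n * δ) := by
          rw [← ENNReal.ofReal_add hδ (by positivity)]
          push_cast
          ring_nf
    have hsub : Icc t b ⊆ Icc a b := Icc_subset_Icc_left ht.1
    have hstep := hψ a ha t ht (by rw [dist_comm, hγt])
    have htail := ih ht.2 (hγ.mono hsub) (fun s hs u hu => hψ s (hsub hs) u (hsub hu)) hrest
    push_cast
    linarith [abs_sub_le (ψ a) (ψ t) (ψ b)]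

/-- for every `ε > 0` there is a constant `C ≥ 1`, depending only on
`ε`, such that any holomorphic injective map `g` defined on the `εℓ`-neighborhood
of (the image of) a rectifiable curve `γ` of length `ℓ > 0` has distortion at most
`C` on the image of the curve: `|g'(u)| ≤ C |g'(v)|` for all `u, v` on the curve. -/
theorem stmt1 (ε : ℝ) (hε : 0 < ε) :
    ∃ C : ℝ, 1 ≤ C ∧
      ∀ (γ : ℝ → ℂ) (ℓ : ℝ),
        ContinuousOn γ (Set.Icc 0 1) →
        BoundedVariationOn γ (Set.Icc 0 1) →
        (eVariationOn γ (Set.Icc 0 1)).toReal = ℓ →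
        0 < ℓ →
        ∀ g : ℂ → ℂ,
          DifferentiableOn ℂ g (Metric.thickening (ε * ℓ) (γ '' Set.Icc 0 1)) →
          Set.InjOn g (Metric.thickening (ε * ℓ) (γ '' Set.Icc 0 1)) →
          ∀ u ∈ γ '' Set.Icc 0 1, ∀ v ∈ γ '' Set.Icc 0 1,
            ‖deriv g u‖ ≤ C * ‖deriv g v‖ := by
  set N := ⌈512 / ε⌉₊ + 1
  refine ⟨64 ^ N, one_le_pow₀ (by norm_num), ?_⟩
  rintro γ ℓ hγ hbv hℓ hℓpos g hg hginj _ ⟨s, hs, rfl⟩ _ ⟨t, ht, rfl⟩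
  set ψ : ℝ → ℝ := fun x => Real.log ‖deriv g (γ x)‖
  have hstep : ∀ x ∈ Icc (0 : ℝ) 1, ∀ y ∈ Icc (0 : ℝ) 1, dist (γ x) (γ y) ≤ ε * ℓ / 512 →
      |ψ x - ψ y| ≤ Real.log 64 := fun x hx y hy =>
    Complex.abs_log_norm_deriv_sub_le hg hginj (by positivity)
      (ball_subset_thickening (mem_image_of_mem γ hx) _)
      (ball_subset_thickening (mem_image_of_mem γ hy) _)
  have hvar : eVariationOn γ (Icc 0 1) < ENNReal.ofReal (N * (ε * ℓ / 512)) := by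
    rw [← ENNReal.ofReal_toReal hbv, hℓ, ENNReal.ofReal_lt_ofReal_iff (by positivity)]
    have : 512 / ε < N := by simp only [N]; push_cast; linarith [Nat.le_ceil (512 / ε)]
    rw [div_lt_iff₀ hε] at this
    nlinarith
  have hchain : ∀ x ∈ Icc (0 : ℝ) 1, ∀ y ∈ Icc (0 : ℝ) 1, x ≤ y → |ψ x - ψ y| ≤ N * Real.log 64 :=
    fun x hx y hy hxy => abs_sub_le_of_eVariationOn_lt hxy (hγ.mono (Icc_subset_Icc hx.1 hy.2))
      (by positivity) (fun a ha b hb => hstep a ⟨hx.1.trans ha.1, ha.2.trans hy.2⟩ b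
        ⟨hx.1.trans hb.1, hb.2.trans hy.2⟩) N
      ((eVariationOn.mono γ (Icc_subset_Icc hx.1 hy.2)).trans_lt hvar)
  have hlog : |ψ s - ψ t| ≤ N * Real.log 64 := by
    rcases le_total s t with hst | hts
    · exact hchain s hs t ht hst
    · exact abs_sub_comm (ψ s) (ψ t) ▸ hchain t ht s hs hts
  have hpos : ∀ x ∈ Icc (0 : ℝ) 1, 0 < ‖deriv g (γ x)‖ := fun x hx => norm_pos_iff.mpr
    (Complex.deriv_ne_zero_of_injOn isOpen_thickening hg hginj
      (self_subset_thickening (by positivity) _ (mem_image_of_mem γ hx)))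
  rw [← Real.log_le_log_iff (hpos s hs) (by positivity [hpos t ht]),
    Real.log_mul (by positivity) (hpos t ht).ne', Real.log_pow]
  linarith [(abs_le.mp hlog).2]
end

section
/- Let N_f(z) = z − tan(z). For every k ∈ ℤ and every t ∈ ℝ with t ≠ 0, one has cos(π/2 + kπ + it) ≠ 0 and N_f(π/2 + kπ + it) = π/2 + kπ + i(t − coth t). In particular, the vertical lines {z ∈ ℂ : Re(z) = π/2 + kπ}, with the real pole removed, are invariant under N_f. -/
open Complex

namespace Complex

variable {x : ℂ}

lemma cos_pi_div_two_add_int_mul_pi (k : ℤ) : cos (Real.pi / 2 + k * Real.pi) = 0 :=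
  cos_eq_zero_iff.2 ⟨k, by ring⟩

lemma sin_ne_zero_of_cos_eq_zero (hx : cos x = 0) : sin x ≠ 0 := by
  intro hs
  simpa [hs, hx] using sin_sq_add_cos_sq x

lemma cos_add_mul_I_of_cos_eq_zero (hx : cos x = 0) (y : ℂ) :
    cos (x + y * I) = -(sin x * sinh y * I) := by
  rw [cos_add_mul_I, hx]
  ring

lemma sin_add_mul_I_of_cos_eq_zero (hx : cos x = 0) (y : ℂ) :
    sin (x + y * I) = sin x * cosh y := by
  rw [sin_add_mul_I, hx]
  ring

/-- Holds even where `sinh y = 0`, since then both sides are `0` by the convention `a / 0 = 0`. -/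
lemma tan_add_mul_I_of_cos_eq_zero (hx : cos x = 0) (y : ℂ) :
    tan (x + y * I) = cosh y / sinh y * I := by
  have hsin := sin_ne_zero_of_cos_eq_zero hx
  rw [tan_eq_sin_div_cos, sin_add_mul_I_of_cos_eq_zero hx, cos_add_mul_I_of_cos_eq_zero hx]
  rcases eq_or_ne (sinh y) 0 with hsinh | hsinh
  · simp [hsinh]
  · field_simp
    rw [I_sq]
    ring

lemma cos_add_ofReal_mul_I_ne_zero_of_cos_eq_zero (hx : cos x = 0) {t : ℝ} (ht : t ≠ 0) :
    cos (x + t * I) ≠ 0 := by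
  have hsinh : sinh (t : ℂ) ≠ 0 := by
    rw [← ofReal_sinh]
    exact_mod_cast Real.sinh_ne_zero.2 ht
  rw [cos_add_mul_I_of_cos_eq_zero hx]
  exact neg_ne_zero.2 (mul_ne_zero (mul_ne_zero (sin_ne_zero_of_cos_eq_zero hx) hsinh) I_ne_zero)

end Complex

/-- for `N_f(z) = z - tan z`, every `k ∈ ℤ` and real `t ≠ 0`,
`cos(π/2 + kπ + it) ≠ 0` and `N_f(π/2 + kπ + it) = π/2 + kπ + i(t - coth t)`. -/
theorem stmt3 (k : ℤ) (t : ℝ) (ht : t ≠ 0) :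
    Complex.cos ((Real.pi : ℂ) / 2 + (k : ℂ) * (Real.pi : ℂ) + (t : ℂ) * Complex.I) ≠ 0 ∧
    ((Real.pi : ℂ) / 2 + (k : ℂ) * (Real.pi : ℂ) + (t : ℂ) * Complex.I) -
        Complex.tan ((Real.pi : ℂ) / 2 + (k : ℂ) * (Real.pi : ℂ) + (t : ℂ) * Complex.I) =
      (Real.pi : ℂ) / 2 + (k : ℂ) * (Real.pi : ℂ) +
        ((t - Real.cosh t / Real.sinh t : ℝ) : ℂ) * Complex.I := by
  have hx := cos_pi_div_two_add_int_mul_pi k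
  refine ⟨cos_add_ofReal_mul_I_ne_zero_of_cos_eq_zero hx ht, ?_⟩
  rw [tan_add_mul_I_of_cos_eq_zero hx]
  push_cast
  ring
end

section
/- Let N_g(z) = z + i + tan(z). For every k ∈ ℤ and every t ∈ ℝ with t ≠ 0, one has cos(π/2 + kπ + it) ≠ 0 and N_g(π/2 + kπ + it) = π/2 + kπ + i(t + 1 + coth t). Moreover, for every t < 0 one has t + 1 + coth t < t < 0; in particular, on the lower half-lines {Re(z) = π/2 + kπ, Im(z) < 0} the imaginary part strictly decreases under N_g. -/
/-!
Since `tan` has period `π`, the line `Re z = π/2 + kπ` behaves like `Re z = π/2`, where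
`tan (π/2 + it) = -1 / tan (it) = i coth t`; the zeros of `cos` are real, so none lies on these
lines off the real axis. For `t < 0`, `1 + coth t = eᵗ / sinh t` is negative.
-/

open Complex

lemma Complex.cos_ne_zero_of_im_ne_zero {z : ℂ} (hz : z.im ≠ 0) : cos z ≠ 0 := by
  rw [Ne, cos_eq_zero_iff]
  rintro ⟨k, rfl⟩
  apply hz
  norm_cast

lemma Complex.tan_pi_div_two_add (w : ℂ) : tan (Real.pi / 2 + w) = -(tan w)⁻¹ := by
  rw [← sub_neg_eq_add, tan_pi_div_two_sub, tan_neg, inv_neg]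

lemma Complex.tan_pi_div_two_add_ofReal_mul_I (t : ℝ) :
    tan (Real.pi / 2 + t * I) = ((Real.cosh t / Real.sinh t : ℝ) : ℂ) * I := by
  rw [tan_pi_div_two_add, tan_mul_I, mul_inv, inv_I, ← ofReal_tanh, Real.tanh_eq_sinh_div_cosh,
    ← ofReal_inv, inv_div]
  ring

lemma Real.one_add_cosh_div_sinh_neg {t : ℝ} (ht : t < 0) : 1 + cosh t / sinh t < 0 := by
  have hsinh : sinh t < 0 := sinh_neg_iff.mpr ht
  have hexp : 1 + cosh t / sinh t = exp t / sinh t := by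
    rw [← sinh_add_cosh]
    field_simp [hsinh.ne]
  rw [hexp]
  exact div_neg_of_pos_of_neg (exp_pos t) hsinh

/-- for `N_g(z) = z + i + tan z`, every `k ∈ ℤ` and real `t ≠ 0`,
`cos(π/2 + kπ + it) ≠ 0` and `N_g(π/2 + kπ + it) = π/2 + kπ + i(t + 1 + coth t)`;
moreover for `t < 0` one has `t + 1 + coth t < t < 0`. -/
theorem stmt6 :
    (∀ (k : ℤ) (t : ℝ), t ≠ 0 →
      Complex.cos ((Real.pi : ℂ) / 2 + (k : ℂ) * (Real.pi : ℂ) + (t : ℂ) * Complex.I) ≠ 0 ∧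
      ((Real.pi : ℂ) / 2 + (k : ℂ) * (Real.pi : ℂ) + (t : ℂ) * Complex.I) + Complex.I +
          Complex.tan ((Real.pi : ℂ) / 2 + (k : ℂ) * (Real.pi : ℂ) + (t : ℂ) * Complex.I) =
        (Real.pi : ℂ) / 2 + (k : ℂ) * (Real.pi : ℂ) +
          ((t + 1 + Real.cosh t / Real.sinh t : ℝ) : ℂ) * Complex.I) ∧
    (∀ t : ℝ, t < 0 →
      t + 1 + Real.cosh t / Real.sinh t < t ∧ t + 1 + Real.cosh t / Real.sinh t < 0) := by
  refine ⟨fun k t ht => ⟨cos_ne_zero_of_im_ne_zero (by simpa using ht), ?_⟩,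
    fun t ht => ?_⟩
  · rw [add_right_comm _ _ ((t : ℂ) * I), tan_add_int_mul_pi,
      tan_pi_div_two_add_ofReal_mul_I]
    push_cast
    ring
  · have := Real.one_add_cosh_div_sinh_neg ht
    constructor <;> linarith
end

section
/- Let α, β ∈ ℂ with β ≠ 0, h(z) = e^z + βz + α and N_h(z) = z − h(z)/h'(z). There exist constants C > 1 and R > 0 such that for every w ∈ ℂ with h(w) = 0 and |w| > R, and every z ∈ ℂ with |z − w| < 1, one has h'(z) = e^z + β ≠ 0 and |N_h''(z)| ≤ C, where N_h''(z) = h''(z)/h'(z) + h(z)h'''(z)/(h'(z))² − 2h(z)(h''(z))²/(h'(z))³. -/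
/-!
Near a zero `w` of `h` with `|w|` large, `|e^w| = |βw + α|` is large, hence so is `|e^z|` for
`|z - w| < 1`. Then `e^z + β` is comparable to `e^z`, and `h(z) = h(z) - h(w)` is `O(|e^z|)`,
so each of the three terms of `N_h''(z)` is bounded by an absolute constant.
-/

open Complex

theorem norm_le_two_mul_norm_add {E : Type*} [SeminormedAddCommGroup E] {a b : E}
    (hb : 2 * ‖b‖ ≤ ‖a‖) : ‖a‖ ≤ 2 * ‖a + b‖ := by
  have := norm_sub_le (a + b) b
  rw [add_sub_cancel_right] at this
  linarith

theorem norm_div_add_mul_div_sq_sub_le {𝕜 : Type*} [NormedField 𝕜] {a d H : 𝕜} {c : ℝ}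
    (hc : 0 ≤ c) (had : ‖a‖ ≤ 2 * ‖d‖) (hH : ‖H‖ ≤ c * ‖a‖) :
    ‖a / d + H * a / d ^ 2 - 2 * H * a ^ 2 / d ^ 3‖ ≤ 2 + 20 * c := by
  set t := a / d
  set s := H / d
  have hexpr : a / d + H * a / d ^ 2 - 2 * H * a ^ 2 / d ^ 3 = t + s * t - 2 * s * t ^ 2 := by
    simp only [t, s]; ring
  have ht : ‖t‖ ≤ 2 := by
    rw [norm_div]; exact div_le_of_le_mul₀ (norm_nonneg _) zero_le_two had
  have hs : ‖s‖ ≤ 2 * c :=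
    calc ‖s‖ = ‖H‖ / ‖d‖ := norm_div _ _
      _ ≤ c * ‖a‖ / ‖d‖ := by gcongr
      _ = c * ‖t‖ := by rw [norm_div, mul_div_assoc]
      _ ≤ 2 * c := by nlinarith
  rw [hexpr]
  have hlast : ‖2 * s * t ^ 2‖ ≤ 2 * ‖s‖ * ‖t‖ ^ 2 := by
    rw [mul_assoc, two_mul, mul_assoc, two_mul, ← norm_pow, ← norm_mul]
    exact norm_add_le _ _
  calc ‖t + s * t - 2 * s * t ^ 2‖ ≤ ‖t‖ + ‖s‖ * ‖t‖ + 2 * ‖s‖ * ‖t‖ ^ 2 := by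
        refine (norm_sub_le _ _).trans (add_le_add ((norm_add_le _ _).trans ?_) hlast)
        rw [norm_mul]
    _ ≤ 2 + 2 * c * 2 + 2 * (2 * c) * 2 ^ 2 := by gcongr
    _ = 2 + 20 * c := by ring

theorem Complex.norm_exp_le_exp_norm_sub_mul (w z : ℂ) :
    ‖exp w‖ ≤ Real.exp ‖w - z‖ * ‖exp z‖ := by
  rw [show w = (w - z) + z by ring, exp_add, norm_mul, add_sub_cancel_right]
  gcongr
  exact norm_exp_le_exp_norm _

theorem Complex.norm_mul_sub_norm_le_norm_exp {α β w : ℂ} (hw : exp w + β * w + α = 0) :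
    ‖β‖ * ‖w‖ - ‖α‖ ≤ ‖exp w‖ := by
  rw [show exp w = -(β * w) - α by linear_combination hw, ← norm_mul]
  simpa only [norm_neg] using norm_sub_norm_le (-(β * w)) α

theorem Complex.norm_exp_add_mul_add_le {α β w : ℂ} (hw : exp w + β * w + α = 0) (z : ℂ) :
    ‖exp z + β * z + α‖ ≤ ‖exp z‖ + ‖exp w‖ + ‖β‖ * ‖z - w‖ := by
  rw [show exp z + β * z + α = exp z - exp w + β * (z - w) by linear_combination hw, ← norm_mul]
  exact (norm_add_le _ _).trans (add_le_add_left (norm_sub_le _ _) _)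

/-- for `h(z) = e^z + βz + α` with `β ≠ 0` there exist `C > 1` and
`R > 0` such that for every zero `w` of `h` with `|w| > R` and every `z` with
`|z - w| < 1`, one has `h'(z) = e^z + β ≠ 0` and `|N_h''(z)| ≤ C`. -/
theorem stmt10 (α β : ℂ) (hβ : β ≠ 0) :
    ∃ C > (1 : ℝ), ∃ R > (0 : ℝ), ∀ w : ℂ,
      Complex.exp w + β * w + α = 0 → ‖w‖ > R →
      ∀ z : ℂ, ‖z - w‖ < 1 →
        Complex.exp z + β ≠ 0 ∧
        ‖(Complex.exp z / (Complex.exp z + β) +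
            (Complex.exp z + β * z + α) * Complex.exp z / (Complex.exp z + β) ^ 2 -
            2 * (Complex.exp z + β * z + α) * (Complex.exp z) ^ 2 /
              (Complex.exp z + β) ^ 3)‖ ≤ C := by
  have hβ0 : 0 < ‖β‖ := norm_pos_iff.mpr hβ
  have he : 0 < Real.exp 1 := Real.exp_pos 1
  refine ⟨2 + 20 * (2 + Real.exp 1), by linarith,
    (2 * Real.exp 1 * ‖β‖ + ‖α‖) / ‖β‖, div_pos (by positivity) hβ0, fun w hw hwR z hz ↦ ?_⟩
  have hwz : ‖exp w‖ ≤ Real.exp 1 * ‖exp z‖ :=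
    (norm_exp_le_exp_norm_sub_mul w z).trans (by rw [norm_sub_rev]; gcongr)
  have hβz : 2 * ‖β‖ ≤ ‖exp z‖ := by
    have := norm_mul_sub_norm_le_norm_exp hw
    rw [gt_iff_lt, div_lt_iff₀ hβ0] at hwR
    nlinarith
  have hH : ‖exp z + β * z + α‖ ≤ (2 + Real.exp 1) * ‖exp z‖ := by
    have := norm_exp_add_mul_add_le hw z
    nlinarith [norm_nonneg β]
  have had := norm_le_two_mul_norm_add hβz
  refine ⟨fun h ↦ exp_ne_zero z (norm_eq_zero.mp ?_), ?_⟩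
  · rw [h, norm_zero] at had
    linarith [norm_nonneg (exp z)]
  · exact norm_div_add_mul_div_sq_sub_le (by positivity) had hH
end

section
/- Let α, β ∈ ℂ with β ≠ 0, h(z) = e^z + βz + α and N_h(z) = z − h(z)/h'(z). There exist constants r > 0 and R > 0 such that for every w ∈ ℂ with h(w) = 0 and |w| > R, and every z ∈ ℂ with |z − w| < r, one has h'(z) = e^z + β ≠ 0 and |N_h'(z)| < 1, where N_h'(z) = h(z)h''(z)/(h'(z))². -/
/-!
Near a zero `w` of `h`, write `E = e^w` and `u = e^(z - w)`. Then `h(z) = E(u - 1) + β(z - w)`,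
`e^z = E u` and `h'(z) = E u + β`. For `|z - w| < 1/10` we have `|u - 1| ≤ 1/5`, and far out
`|E| = |βw + α|` dominates `|β|`, so `|h(z) e^z| ≈ |E|² |u - 1| |u|` is small compared with
`|h'(z)|² ≈ |E|² |u|²`.
-/

open Complex

lemma norm_mul_lt_norm_sq_of_norm_sub_one_le {𝕜 : Type*} [NormedField 𝕜] {E u β δ : 𝕜}
    (hu : ‖u - 1‖ ≤ 1 / 5) (hδ : ‖δ‖ ≤ 1 / 10) (hE : 5 * ‖β‖ < ‖E‖) :
    ‖(E * (u - 1) + β * δ) * (E * u)‖ < ‖E * u + β‖ ^ 2 := by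
  have hu_le : ‖u‖ ≤ 6 / 5 := by
    calc ‖u‖ = ‖(u - 1) + 1‖ := by rw [sub_add_cancel]
      _ ≤ ‖u - 1‖ + ‖(1 : 𝕜)‖ := norm_add_le _ _
      _ ≤ 6 / 5 := by rw [norm_one]; linarith
  have hu_ge : 4 / 5 ≤ ‖u‖ := by
    have := norm_sub_norm_le (1 : 𝕜) u
    rw [norm_one, norm_sub_rev] at this
    linarith
  have hM := norm_nonneg E
  have hb := norm_nonneg β
  have hh : ‖E * (u - 1) + β * δ‖ ≤ ‖E‖ / 5 + ‖β‖ / 10 := by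
    calc ‖E * (u - 1) + β * δ‖ ≤ ‖E‖ * ‖u - 1‖ + ‖β‖ * ‖δ‖ := by
          simpa only [norm_mul] using norm_add_le (E * (u - 1)) (β * δ)
      _ ≤ ‖E‖ / 5 + ‖β‖ / 10 := by
          nlinarith [mul_le_mul_of_nonneg_left hu hM, mul_le_mul_of_nonneg_left hδ hb]
  have hEu : ‖E * u‖ ≤ 6 / 5 * ‖E‖ := by rw [norm_mul]; nlinarith
  have hden : 4 / 5 * ‖E‖ - ‖β‖ ≤ ‖E * u + β‖ := by
    have := norm_sub_norm_le (E * u) (-β)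
    rw [norm_mul, norm_neg, sub_neg_eq_add] at this
    nlinarith
  calc ‖(E * (u - 1) + β * δ) * (E * u)‖
      ≤ (‖E‖ / 5 + ‖β‖ / 10) * (6 / 5 * ‖E‖) := by
        rw [norm_mul]; exact mul_le_mul hh hEu (norm_nonneg _) (by positivity)
    _ < (4 / 5 * ‖E‖ - ‖β‖) ^ 2 := by nlinarith
    _ ≤ ‖E * u + β‖ ^ 2 := by gcongr; linarith

lemma five_mul_norm_lt_norm_exp_of_eq_zero {α β w : ℂ} (hβ : β ≠ 0)
    (hw : exp w + β * w + α = 0) (hwR : 5 + ‖α‖ / ‖β‖ < ‖w‖) :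
    5 * ‖β‖ < ‖exp w‖ := by
  have hb : 0 < ‖β‖ := norm_pos_iff.mpr hβ
  have hexp : β * w - -α = -exp w := by linear_combination hw
  have hwR' : 5 * ‖β‖ + ‖α‖ < ‖β‖ * ‖w‖ := by
    rw [add_div' _ _ _ hb.ne', div_lt_iff₀ hb] at hwR
    linarith
  calc 5 * ‖β‖ < ‖β * w‖ - ‖-α‖ := by rw [norm_mul, norm_neg]; linarith
    _ ≤ ‖β * w - -α‖ := norm_sub_norm_le _ _
    _ = ‖exp w‖ := by rw [hexp, norm_neg]

/-- for `h(z) = e^z + βz + α` with `β ≠ 0` there exist `r > 0` and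
`R > 0` such that for every zero `w` of `h` with `|w| > R` and every `z` with
`|z - w| < r`, one has `h'(z) = e^z + β ≠ 0` and `|N_h'(z)| < 1`, where
`N_h'(z) = h(z)h''(z)/(h'(z))²`. -/
theorem stmt11 (α β : ℂ) (hβ : β ≠ 0) :
    ∃ r > (0 : ℝ), ∃ R > (0 : ℝ), ∀ w : ℂ,
      Complex.exp w + β * w + α = 0 → ‖w‖ > R →
      ∀ z : ℂ, ‖z - w‖ < r →
        Complex.exp z + β ≠ 0 ∧
        ‖(Complex.exp z + β * z + α) * Complex.exp z / (Complex.exp z + β) ^ 2‖ < 1 := by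
  refine ⟨1 / 10, by norm_num, 5 + ‖α‖ / ‖β‖, by positivity, fun w hw hwR z hz => ?_⟩
  have hexp_z : exp z = exp w * exp (z - w) := by rw [← exp_add, add_sub_cancel]
  have hh : exp z + β * z + α = exp w * (exp (z - w) - 1) + β * (z - w) := by
    rw [hexp_z]; linear_combination hw
  have hu : ‖exp (z - w) - 1‖ ≤ 1 / 5 := by
    have := norm_exp_sub_one_le (x := z - w) (by linarith)
    linarith
  have key := norm_mul_lt_norm_sq_of_norm_sub_one_le hu hz.le
    (five_mul_norm_lt_norm_exp_of_eq_zero hβ hw hwR)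
  rw [← hh, ← hexp_z] at key
  have hden : 0 < ‖exp z + β‖ ^ 2 := lt_of_le_of_lt (norm_nonneg _) key
  refine ⟨fun h0 => by simp [h0] at hden, ?_⟩
  rwa [norm_div, norm_pow, div_lt_one hden]
end

section
/- Let α, β ∈ ℂ with β ≠ 0 and let N_h(z) = (z − 1 − αe^{−z})/(1 + βe^{−z}). There exists c > 0 such that for every w ∈ ℂ with Re(w) < −c, one has 1 + βe^{−w} ≠ 0 and |N_h(w)| ≤ |w|/2. -/
/-!
For `Re w < -c` we have `|e^{-w}| = e^{-Re w} > e^c` and `|w| > c`. The denominator has modulus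
at least `|β||e^{-w}| - 1` and the numerator at most `|w| + 1 + |α||e^{-w}|`, so the quotient is
at most `|w|/2` as soon as `c|β| ≥ 2|α| + 1` and `e^c ≥ 3c + 2`; both hold for `c` large.
-/

lemma three_mul_add_two_le_exp {c : ℝ} (hc : 5 ≤ c) : 3 * c + 2 ≤ Real.exp c := by
  nlinarith [Real.quadratic_le_exp_of_nonneg (by linarith : (0 : ℝ) ≤ c)]

section NormedField

variable {𝕜 : Type*} [NormedField 𝕜]

lemma norm_sub_one_sub_mul_le (z a e : 𝕜) : ‖z - 1 - a * e‖ ≤ ‖z‖ + 1 + ‖a‖ * ‖e‖ := by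
  calc ‖z - 1 - a * e‖ ≤ ‖z - 1‖ + ‖a * e‖ := norm_sub_le _ _
    _ ≤ ‖z‖ + ‖(1 : 𝕜)‖ + ‖a‖ * ‖e‖ := by gcongr; exacts [norm_sub_le _ _, (norm_mul _ _).le]
    _ = ‖z‖ + 1 + ‖a‖ * ‖e‖ := by rw [norm_one]

lemma norm_sub_one_le_norm_one_add (x : 𝕜) : ‖x‖ - 1 ≤ ‖1 + x‖ := by
  simpa [add_comm] using norm_sub_norm_le x (-1 : 𝕜)

lemma norm_newton_quotient_le_half {z a b e : 𝕜} {c : ℝ} (hcb : 2 * ‖a‖ + 1 ≤ c * ‖b‖)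
    (hz : c ≤ ‖z‖) (he : 3 * c + 2 ≤ ‖e‖) :
    1 + b * e ≠ 0 ∧ ‖(z - 1 - a * e) / (1 + b * e)‖ ≤ ‖z‖ / 2 := by
  have ha := norm_nonneg a
  have hb := norm_nonneg b
  have hc : 0 < c := by nlinarith
  have hbe : 3 ≤ ‖b‖ * ‖e‖ := by nlinarith
  have hden : ‖b‖ * ‖e‖ - 1 ≤ ‖1 + b * e‖ := by
    simpa [norm_mul] using norm_sub_one_le_norm_one_add (b * e)
  have hden_pos : 0 < ‖1 + b * e‖ := by linarith
  refine ⟨norm_pos_iff.mp hden_pos, ?_⟩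
  rw [norm_div, div_le_div_iff₀ hden_pos two_pos]
  have hnum := norm_sub_one_sub_mul_le z a e
  have key : 2 * (‖z‖ + 1 + ‖a‖ * ‖e‖) ≤ ‖z‖ * (‖b‖ * ‖e‖ - 1) := by
    nlinarith [mul_nonneg (sub_nonneg.mpr hz) (sub_nonneg.mpr hbe),
      mul_nonneg (sub_nonneg.mpr hcb) (norm_nonneg e)]
  nlinarith [norm_nonneg z]

end NormedField

/-- for `N_h(z) = (z - 1 - αe^{-z})/(1 + βe^{-z})` with `β ≠ 0`
there exists `c > 0` such that for all `w` with `Re w < -c` the denominator is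
nonzero and `|N_h(w)| ≤ |w|/2`. -/
theorem stmt12 (α β : ℂ) (hβ : β ≠ 0) :
    ∃ c > (0 : ℝ), ∀ w : ℂ, w.re < -c →
      1 + β * Complex.exp (-w) ≠ 0 ∧
      ‖(w - 1 - α * Complex.exp (-w)) / (1 + β * Complex.exp (-w))‖ ≤
        ‖w‖ / 2 := by
  set c := max ((2 * ‖α‖ + 1) / ‖β‖) 5
  have hc5 : 5 ≤ c := le_max_right _ _
  have hcβ : 2 * ‖α‖ + 1 ≤ c * ‖β‖ :=
    (div_le_iff₀ (norm_pos_iff.mpr hβ)).mp (le_max_left _ _)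
  refine ⟨c, by linarith, fun w hw => norm_newton_quotient_le_half hcβ ?_ ?_⟩
  · linarith [neg_le_abs w.re, Complex.abs_re_le_norm w]
  · calc 3 * c + 2 ≤ Real.exp c := three_mul_add_two_le_exp hc5
      _ ≤ ‖Complex.exp (-w)‖ := by
        rw [Complex.norm_exp, Complex.neg_re]; exact Real.exp_le_exp.mpr (by linarith)
end

section
/- Let α, β ∈ ℂ with β ≠ 0 and let N_h(z) = (z − 1 − αe^{−z})/(1 + βe^{−z}). There exists c > 0 such that for every w ∈ ℂ with Re(w) > c and |Im(w)| ≤ e^{Re(w)}/(3|β|), one has e^w + β ≠ 0 and |Re(N_h(w)) − Re(w) + 1| < 1/2; in particular −3/2 < Re(N_h(w)) − Re(w) < −1/2. -/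
/-!
Write `N(w) = (w - 1 - α e^{-w}) / (1 + β e^{-w})` and `x = Re w`. Then
`N(w) - (w - 1) = -(α + β (w - 1)) e^{-w} / (1 + β e^{-w})`. For large `x` the
denominator is close to `1`, while the numerator has modulus at most
`(|α| + |β| (x + 1)) e^{-x} + |β| |Im w| e^{-x}`: the first term tends to `0`, and the
second is at most `1/3` in the region `|Im w| ≤ e^x / (3|β|)`. Hence `N(w)` lies within
`1/2` of `w - 1`. The same estimate `|β e^{-w}| < 1` gives `e^w + β = e^w (1 + β e^{-w}) ≠ 0`.
-/

open Complex Filter Topology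

lemma newton_step_sub_eq {α β E : ℂ} (w : ℂ) (hD : 1 + β * E ≠ 0) :
    (w - 1 - α * E) / (1 + β * E) - (w - 1) = -((α + β * (w - 1)) * E) / (1 + β * E) := by
  rw [eq_div_iff hD, sub_mul, div_mul_cancel₀ _ hD]
  ring

lemma one_add_ne_zero_of_norm_lt_one {R : Type*} [NormedRing R] [NormOneClass R] {δ : R}
    (hδ : ‖δ‖ < 1) : 1 + δ ≠ 0 := by
  intro h
  rw [eq_neg_of_add_eq_zero_right h, norm_neg, norm_one] at hδ
  exact lt_irrefl _ hδ

lemma norm_div_one_add_le {𝕜 : Type*} [NormedDivisionRing 𝕜] (u : 𝕜) {δ : 𝕜} (hδ : ‖δ‖ < 1) :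
    ‖u / (1 + δ)‖ ≤ ‖u‖ / (1 - ‖δ‖) := by
  have hlower : 1 - ‖δ‖ ≤ ‖1 + δ‖ := by
    simpa using norm_sub_norm_le 1 (-δ)
  rw [norm_div]
  exact div_le_div_of_nonneg_left (norm_nonneg u) (by linarith) hlower

lemma norm_newton_step_sub_le (α w : ℂ) {β E : ℂ} (hδ : ‖β * E‖ < 1) :
    ‖(w - 1 - α * E) / (1 + β * E) - (w - 1)‖ ≤ ‖(α + β * (w - 1)) * E‖ / (1 - ‖β * E‖) := by
  rw [newton_step_sub_eq w (one_add_ne_zero_of_norm_lt_one hδ)]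
  simpa using norm_div_one_add_le (-((α + β * (w - 1)) * E)) hδ

lemma tendsto_affine_mul_exp_neg_atTop (a b : ℝ) :
    Tendsto (fun x : ℝ => (a + b * x) * Real.exp (-x)) atTop (𝓝 0) := by
  have h := (Real.tendsto_exp_neg_atTop_nhds_zero.const_mul a).add
    ((Real.tendsto_pow_mul_exp_neg_atTop_nhds_zero 1).const_mul b)
  simpa [add_mul, mul_assoc] using h

lemma norm_affine_mul_exp_neg_le (α β w : ℂ) (hw : 0 ≤ w.re) :
    ‖(α + β * (w - 1)) * exp (-w)‖ ≤
      (‖α‖ + ‖β‖ * (w.re + 1)) * Real.exp (-w.re) + ‖β‖ * |w.im| * Real.exp (-w.re) := by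
  have hw1 : ‖w - 1‖ ≤ w.re + |w.im| + 1 := by
    calc ‖w - 1‖ ≤ ‖w‖ + 1 := by simpa using norm_sub_le w 1
      _ ≤ |w.re| + |w.im| + 1 := by linarith [norm_le_abs_re_add_abs_im w]
      _ = w.re + |w.im| + 1 := by rw [abs_of_nonneg hw]
  have hnum : ‖α + β * (w - 1)‖ ≤ ‖α‖ + ‖β‖ * (w.re + |w.im| + 1) := by
    calc ‖α + β * (w - 1)‖ ≤ ‖α‖ + ‖β‖ * ‖w - 1‖ := by
          simpa only [norm_mul] using norm_add_le α (β * (w - 1))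
      _ ≤ ‖α‖ + ‖β‖ * (w.re + |w.im| + 1) := by gcongr
  rw [norm_mul, norm_exp, neg_re]
  nlinarith [Real.exp_pos (-w.re)]

lemma exp_add_eq_exp_mul_one_add (w β : ℂ) : exp w + β = exp w * (1 + β * exp (-w)) := by
  rw [mul_add, mul_one, mul_left_comm, ← exp_add, add_neg_cancel, exp_zero, mul_one]

lemma abs_re_sub_re_add_one_le (z w : ℂ) : |z.re - w.re + 1| ≤ ‖z - (w - 1)‖ := by
  refine le_of_eq_of_le ?_ (abs_re_le_norm _)
  congr 1
  simp only [sub_re, one_re]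
  ring

/-- for `N_h(z) = (z - 1 - αe^{-z})/(1 + βe^{-z})` with `β ≠ 0`
there exists `c > 0` such that for all `w` with `Re w > c` and
`|Im w| ≤ e^{Re w}/(3|β|)`, one has `e^w + β ≠ 0` and
`|Re(N_h(w)) - Re(w) + 1| < 1/2`; in particular
`-3/2 < Re(N_h(w)) - Re(w) < -1/2`. -/
theorem stmt13 (α β : ℂ) (hβ : β ≠ 0) :
    ∃ c > (0 : ℝ), ∀ w : ℂ, w.re > c →
      |w.im| ≤ Real.exp w.re / (3 * ‖β‖) →
      Complex.exp w + β ≠ 0 ∧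
      |((w - 1 - α * Complex.exp (-w)) / (1 + β * Complex.exp (-w))).re - w.re + 1| < 1 / 2 ∧
      (-(3 / 2) < ((w - 1 - α * Complex.exp (-w)) / (1 + β * Complex.exp (-w))).re - w.re ∧
        ((w - 1 - α * Complex.exp (-w)) / (1 + β * Complex.exp (-w))).re - w.re < -(1 / 2)) := by
  have hB : 0 < ‖β‖ := norm_pos_iff.mpr hβ
  -- `1/12` works because `(1/12 + 1/3) / (1 - 1/12) = 5/11 < 1/2`.
  obtain ⟨c₀, hc₀⟩ := eventually_atTop.mp <|
    (tendsto_affine_mul_exp_neg_atTop (‖α‖ + ‖β‖) ‖β‖).eventually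
      (gt_mem_nhds (by norm_num : (0 : ℝ) < 1 / 12))
  refine ⟨max c₀ 1, by positivity, fun w hw him => ?_⟩
  set x := w.re
  have hx : 1 ≤ x := (le_max_right _ _).trans hw.le
  have hsmall : (‖α‖ + ‖β‖ * (x + 1)) * Real.exp (-x) < 1 / 12 := by
    have := hc₀ x ((le_max_left _ _).trans hw.le)
    linarith
  have hδ : ‖β * exp (-w)‖ < 1 / 12 := by
    rw [norm_mul, norm_exp, neg_re]
    nlinarith [norm_nonneg α, Real.exp_pos (-x)]
  have him' : ‖β‖ * |w.im| * Real.exp (-x) ≤ 1 / 3 := by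
    rw [le_div_iff₀ (by positivity)] at him
    have : Real.exp x * Real.exp (-x) = 1 := by rw [← Real.exp_add, add_neg_cancel, Real.exp_zero]
    nlinarith [Real.exp_pos (-x)]
  have hnum := norm_affine_mul_exp_neg_le α β w (by linarith)
  have hnear : ‖(w - 1 - α * exp (-w)) / (1 + β * exp (-w)) - (w - 1)‖ < 1 / 2 := by
    refine (norm_newton_step_sub_le α w (hδ.trans (by norm_num))).trans_lt ?_
    rw [div_lt_iff₀ (by linarith)]
    linarith
  have hre := (abs_re_sub_re_add_one_le _ w).trans_lt hnear
  have hexp : exp w + β ≠ 0 := by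
    rw [exp_add_eq_exp_mul_one_add]
    exact mul_ne_zero (exp_ne_zero w) (one_add_ne_zero_of_norm_lt_one (hδ.trans (by norm_num)))
  exact ⟨hexp, hre, by linarith [(abs_lt.mp hre).1], by linarith [(abs_lt.mp hre).2]⟩
end

section
/- Let a, b, c ∈ ℝ with a ≠ 0 and b ≠ 0, let h(t) = ae^t + bt + c, and suppose h has a real zero. Define the Newton iteration x₀ = −c/b and x_{n+1} = x_n − h(x_n)/h'(x_n), where h'(t) = ae^t + b. Then h'(x_n) ≠ 0 for every n ≥ 0 (so the sequence is well defined), the sequence (x_n) is monotone, and it converges to a real zero of h. -/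
/-!
For `a > 0` the function `h` is strictly convex, and `h(x₀) = a e^{x₀} > 0` because `x₀ = -c/b`
kills the affine part. A strictly convex function that is positive at `x₀` and has a zero cannot
have a critical point at `x₀`, so `h'(x₀) ≠ 0`; after reflecting `t ↦ -t` we may assume
`h'(x₀) > 0`. Then all zeros of `h` lie left of `x₀`, and if `ρ` is the largest one, the
tangent line at any `t > ρ` cuts the axis in `(ρ, t)`. So the Newton iterates decrease and stay
above `ρ`; their limit is a zero since `h(xₙ) = h'(xₙ)(xₙ - xₙ₊₁)` with `h'(xₙ)` bounded.
The case `a < 0` follows by applying this to `-h`, which has the same Newton iteration.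
-/

open Filter Set Topology

theorem eq_zero_of_tendsto_newton {f f' : ℝ → ℝ} {x : ℕ → ℝ} {L C : ℝ} (hf : ContinuousAt f L)
    (hrec : ∀ n, x (n + 1) = x n - f (x n) / f' (x n)) (hne : ∀ n, f' (x n) ≠ 0)
    (hC : ∀ n, |f' (x n)| ≤ C) (hL : Tendsto x atTop (𝓝 L)) : f L = 0 := by
  have hfx : ∀ n, f (x n) = f' (x n) * (x n - x (n + 1)) := fun n => by
    rw [hrec n, sub_sub_cancel, mul_div_cancel₀ _ (hne n)]
  have hsteps : Tendsto (fun n => C * |x n - x (n + 1)|) atTop (𝓝 0) := by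
    simpa using ((hL.sub (hL.comp (tendsto_add_atTop_nat 1))).abs).const_mul C
  have hbound : ∀ n, ‖f (x n)‖ ≤ C * |x n - x (n + 1)| := fun n => by
    rw [hfx n, Real.norm_eq_abs, abs_mul]
    exact mul_le_mul_of_nonneg_right (hC n) (abs_nonneg _)
  exact tendsto_nhds_unique ((hf.tendsto).comp hL) (squeeze_zero_norm hbound hsteps)

section StrictMonoDeriv

variable {f f' : ℝ → ℝ}

theorem add_deriv_mul_sub_lt_of_strictMono_deriv (hf : ∀ t, HasDerivAt f (f' t) t)
    (hf' : StrictMono f') {u t : ℝ} (hut : u ≠ t) : f u + f' u * (t - u) < f t := by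
  have hconv : StrictConvexOn ℝ univ f :=
    StrictMono.strictConvexOn_univ_of_deriv
      (continuous_iff_continuousAt.2 fun t => (hf t).continuousAt)
      (by rwa [show deriv f = f' from funext fun t => (hf t).deriv])
  rcases hut.lt_or_gt with hlt | hgt
  · have := hconv.lt_slope_of_hasDerivAt (mem_univ u) (mem_univ t) hlt (hf u)
    rw [slope_def_field, lt_div_iff₀ (sub_pos.2 hlt)] at this
    linarith
  · have := hconv.slope_lt_of_hasDerivAt (mem_univ t) (mem_univ u) hgt (hf u)
    rw [slope_def_field, div_lt_iff₀ (sub_pos.2 hgt)] at this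
    linarith

variable (hf : ∀ t, HasDerivAt f (f' t) t) (hf' : StrictMono f')
include hf hf'

theorem deriv_ne_zero_of_pos_of_strictMono_deriv {x₀ r : ℝ} (hx₀ : 0 < f x₀) (hr : f r = 0) :
    f' x₀ ≠ 0 := by
  intro h
  have hne : x₀ ≠ r := by rintro rfl; linarith
  have := add_deriv_mul_sub_lt_of_strictMono_deriv hf hf' hne
  rw [h, hr] at this
  linarith

theorem lt_of_pos_of_deriv_pos {x₀ r : ℝ} (hx₀ : 0 < f x₀) (hx₀' : 0 < f' x₀) (hr : f r = 0) :
    r < x₀ := by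
  by_contra! hle
  rcases hle.eq_or_lt with rfl | hlt
  · linarith
  · linarith [add_deriv_mul_sub_lt_of_strictMono_deriv hf hf' hlt.ne,
      mul_pos hx₀' (sub_pos.2 hlt)]

theorem exists_greatest_zero_of_pos_of_deriv_pos {x₀ : ℝ} (hx₀ : 0 < f x₀) (hx₀' : 0 < f' x₀)
    (hroot : ∃ r, f r = 0) : ∃ ρ < x₀, f ρ = 0 ∧ ∀ t, ρ < t → 0 < f t := by
  have hcont : Continuous f := continuous_iff_continuousAt.2 fun t => (hf t).continuousAt
  set S := f ⁻¹' {0}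
  have hbdd : BddAbove S := ⟨x₀, fun r hr => (lt_of_pos_of_deriv_pos hf hf' hx₀ hx₀' hr).le⟩
  have hρ : sSup S ∈ S :=
    (isClosed_singleton.preimage hcont).csSup_mem (let ⟨r, hr⟩ := hroot; ⟨r, hr⟩) hbdd
  have hρx₀ : sSup S < x₀ := lt_of_pos_of_deriv_pos hf hf' hx₀ hx₀' hρ
  refine ⟨sSup S, hρx₀, hρ, fun t ht => ?_⟩
  by_contra! hft
  obtain ⟨s, hs, hfs⟩ := intermediate_value_uIcc hcont.continuousOn
    (show (0 : ℝ) ∈ uIcc (f t) (f x₀) from mem_uIcc.2 (Or.inl ⟨hft, hx₀.le⟩))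
  have hρs : sSup S < s := (lt_inf_iff.2 ⟨ht, hρx₀⟩).trans_le hs.1
  exact hρs.not_ge (le_csSup hbdd hfs)

theorem newton_step_mem_Ioo {ρ t : ℝ} (hρ : f ρ = 0) (hρt : ρ < t) (ht : 0 < f t) :
    0 < f' t ∧ t - f t / f' t ∈ Ioo ρ t := by
  have htangent : f t < f' t * (t - ρ) := by
    linarith [add_deriv_mul_sub_lt_of_strictMono_deriv hf hf' hρt.ne']
  have hderiv : 0 < f' t := pos_of_mul_pos_left (ht.trans htangent) (sub_pos.2 hρt).le
  have hquot : f t / f' t < t - ρ := (div_lt_iff₀ hderiv).2 (by linarith)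
  exact ⟨hderiv, by linarith, by linarith [div_pos ht hderiv]⟩

variable {x : ℕ → ℝ} (hrec : ∀ n, x (n + 1) = x n - f (x n) / f' (x n)) (hroot : ∃ r, f r = 0)
include hrec hroot

theorem newton_antitone_of_strictMono_deriv (hx₀ : 0 < f (x 0)) (hx₀' : 0 < f' (x 0)) :
    (∀ n, 0 < f' (x n)) ∧ Antitone x ∧ ∃ L, Tendsto x atTop (𝓝 L) ∧ f L = 0 := by
  obtain ⟨ρ, hρx₀, hρ, hpos⟩ := exists_greatest_zero_of_pos_of_deriv_pos hf hf' hx₀ hx₀' hroot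
  have hgt : ∀ n, ρ < x n := by
    intro n
    induction n with
    | zero => exact hρx₀
    | succ n ih => rw [hrec n]; exact (newton_step_mem_Ioo hf hf' hρ ih (hpos _ ih)).2.1
  have hstep n := newton_step_mem_Ioo hf hf' hρ (hgt n) (hpos _ (hgt n))
  have hanti : Antitone x := antitone_nat_of_succ_le fun n => by
    rw [hrec n]; exact (hstep n).2.2.le
  have hbdd : ∀ n, |f' (x n)| ≤ f' (x 0) := fun n => by
    rw [abs_of_pos (hstep n).1]; exact hf'.monotone (hanti (Nat.zero_le n))
  have hL := tendsto_atTop_ciInf hanti ⟨ρ, by rintro _ ⟨n, rfl⟩; exact (hgt n).le⟩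
  exact ⟨fun n => (hstep n).1, hanti, _, hL,
    eq_zero_of_tendsto_newton (hf _).continuousAt hrec (fun n => (hstep n).1.ne') hbdd hL⟩

theorem newton_monotone_of_strictMono_deriv (hx₀ : 0 < f (x 0)) (hx₀' : f' (x 0) < 0) :
    (∀ n, f' (x n) < 0) ∧ Monotone x ∧ ∃ L, Tendsto x atTop (𝓝 L) ∧ f L = 0 := by
  have hg : ∀ t, HasDerivAt (fun t => f (-t)) (-f' (-t)) t := fun t => by
    simpa [Function.comp_def] using (hf (-t)).comp t (hasDerivAt_neg t)
  have hg' : StrictMono fun t => -f' (-t) := fun s t hst => neg_lt_neg (hf' (neg_lt_neg hst))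
  have hrec' : ∀ n, -x (n + 1) = -x n - f (-(-x n)) / -f' (-(-x n)) := fun n => by
    rw [hrec n, neg_neg, div_neg]; ring
  obtain ⟨hderiv, hanti, L, hL, hfL⟩ :=
    newton_antitone_of_strictMono_deriv (x := fun n => -x n) hg hg' hrec'
      (let ⟨r, hr⟩ := hroot; ⟨-r, by simpa using hr⟩) (by simpa using hx₀) (by simpa using hx₀')
  exact ⟨fun n => by simpa using hderiv n, fun m n hmn => neg_le_neg_iff.1 (hanti hmn), -L,
    by simpa using hL.neg, hfL⟩

theorem newton_of_strictMono_deriv (hx₀ : 0 < f (x 0)) :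
    (∀ n, f' (x n) ≠ 0) ∧ (Monotone x ∨ Antitone x) ∧
      ∃ L, Tendsto x atTop (𝓝 L) ∧ f L = 0 := by
  obtain ⟨r, hr⟩ := hroot
  rcases (deriv_ne_zero_of_pos_of_strictMono_deriv hf hf' hx₀ hr).lt_or_gt with hneg | hpos
  · obtain ⟨hderiv, hmono, hlim⟩ :=
      newton_monotone_of_strictMono_deriv hf hf' hrec ⟨r, hr⟩ hx₀ hneg
    exact ⟨fun n => (hderiv n).ne, Or.inl hmono, hlim⟩
  · obtain ⟨hderiv, hanti, hlim⟩ :=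
      newton_antitone_of_strictMono_deriv hf hf' hrec ⟨r, hr⟩ hx₀ hpos
    exact ⟨fun n => (hderiv n).ne', Or.inr hanti, hlim⟩

end StrictMonoDeriv

theorem newton_of_strictAnti_deriv {f f' : ℝ → ℝ} (hf : ∀ t, HasDerivAt f (f' t) t)
    (hf' : StrictAnti f') {x : ℕ → ℝ} (hrec : ∀ n, x (n + 1) = x n - f (x n) / f' (x n))
    (hroot : ∃ r, f r = 0) (hx₀ : f (x 0) < 0) :
    (∀ n, f' (x n) ≠ 0) ∧ (Monotone x ∨ Antitone x) ∧
      ∃ L, Tendsto x atTop (𝓝 L) ∧ f L = 0 := by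
  have hrec' : ∀ n, x (n + 1) = x n - -f (x n) / -f' (x n) := fun n => by
    rw [neg_div_neg_eq]; exact hrec n
  obtain ⟨hderiv, hmono, L, hL, hfL⟩ := newton_of_strictMono_deriv (fun t => (hf t).neg)
    hf'.neg hrec' (let ⟨r, hr⟩ := hroot; ⟨r, by simp [hr]⟩) (neg_pos.2 hx₀)
  exact ⟨fun n => neg_ne_zero.1 (hderiv n), hmono, L, hL, neg_eq_zero.1 hfL⟩

/-- for `h(t) = ae^t + bt + c` with `a, b ≠ 0` real possessing a
real zero, the Newton iteration started at `x₀ = -c/b` is well defined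
(`h'(xₙ) ≠ 0` for all `n`), monotone, and converges to a real zero of `h`. -/
theorem stmt17 (a b c : ℝ) (ha : a ≠ 0) (hb : b ≠ 0)
    (hzero : ∃ t : ℝ, a * Real.exp t + b * t + c = 0)
    (x : ℕ → ℝ) (hx0 : x 0 = -c / b)
    (hrec : ∀ n : ℕ, x (n + 1) =
      x n - (a * Real.exp (x n) + b * x n + c) / (a * Real.exp (x n) + b)) :
    (∀ n : ℕ, a * Real.exp (x n) + b ≠ 0) ∧
    (Monotone x ∨ Antitone x) ∧
    ∃ L : ℝ, Filter.Tendsto x Filter.atTop (nhds L) ∧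
      a * Real.exp L + b * L + c = 0 := by
  have hderiv : ∀ t, HasDerivAt (fun t => a * Real.exp t + b * t + c) (a * Real.exp t + b) t :=
    fun t => by
      simpa using (((Real.hasDerivAt_exp t).const_mul a).add
        ((hasDerivAt_id t).const_mul b)).add_const c
  have hx0val : a * Real.exp (x 0) + b * x 0 + c = a * Real.exp (x 0) := by
    rw [hx0]; field_simp; ring
  rcases ha.lt_or_gt with hneg | hpos
  · exact newton_of_strictAnti_deriv hderiv
      ((Real.exp_strictMono.const_mul_of_neg hneg).add_const b) hrec hzero
      (by rw [hx0val]; exact mul_neg_of_neg_of_pos hneg (Real.exp_pos _))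
  · exact newton_of_strictMono_deriv hderiv
      ((Real.exp_strictMono.const_mul hpos).add_const b) hrec hzero
      (by rw [hx0val]; positivity)
end
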